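/- Let L be a Lie superalgebra over a field of characteristic ≠ 2 and δ : L × L → L a super-biderivation. Then for all homogeneous u, x, y ∈ L, the element δ(u,[x,y]) − (-1)^{|δ||u|}[u, δ(x,y)] lies in the centralizer Z_L(L') of the derived subalgebra L' = [L,L], i.e., it commutes with all brackets [z,w]. -/

import Mathlib

/-
Write `E(x, y; u, v) = [δ(x,y), [u,v]] - ± [[x,y], δ(u,v)]`. Expanding `δ([x,u],[y,v])`
through both Leibniz rules shows that `E` changes only by a sign when `x` and `u` are exchanged,
while the skew-symmetry of `δ` and of the bracket make it change sign when `x` and `y` are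
exchanged. The two transpositions generate `S₃` with incompatible signs, so `2 E = 0`, i.e.
`E = 0` as `2 ≠ 0`. The same pattern, applied to `T(p, q, u) = [[p,q], δ(u,[x,y]) - ± [u, δ(x,y)]]`
(skew in `p, q`, and up to sign symmetric in `q, u` by `E = 0` and the Jacobi identity), gives
`T = 0`. Finally `T` is bilinear in `(p, q)`, so it vanishes on all of `L' = [L, L]` once it does
on homogeneous elements.
-/

/-- The sign `(-1)^(i*j)` for degrees `i j : ZMod 2`, as an element of the field `F`. -/
def ssign (F : Type*) [Field F] (i j : ZMod 2) : F :=
  if i * j = 1 then -1 else 1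

/-- A Lie superalgebra structure on an `F`-module `L`: a bilinear bracket together with a
`ZMod 2`-grading by submodules, such that the bracket is graded, super-skewsymmetric and
satisfies the super Jacobi identity on homogeneous elements. -/
structure LieSuperAlg (F : Type*) [Field F] (L : Type*) [AddCommGroup L] [Module F L] where
  br : L → L → L
  br_add_left : ∀ x y z : L, br (x + y) z = br x z + br y z
  br_smul_left : ∀ (c : F) (x z : L), br (c • x) z = c • br x z
  br_add_right : ∀ x y z : L, br x (y + z) = br x y + br x z
  br_smul_right : ∀ (c : F) (x z : L), br x (c • z) = c • br x z
  G : ZMod 2 → Submodule F L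
  isInternal : DirectSum.IsInternal G
  br_deg : ∀ {i j : ZMod 2} {x y : L}, x ∈ G i → y ∈ G j → br x y ∈ G (i + j)
  super_skew : ∀ {i j : ZMod 2} {x y : L}, x ∈ G i → y ∈ G j →
    br x y = -(ssign F i j • br y x)
  super_jacobi : ∀ {i j k : ZMod 2} {x y z : L}, x ∈ G i → y ∈ G j → z ∈ G k →
    br x (br y z) = br (br x y) z + ssign F i j • br y (br x z)

variable {F : Type*} [Field F] {L : Type*} [AddCommGroup L] [Module F L]

/-- `δ : L × L → L` is a super-biderivation of degree `τ`. -/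
structure IsSuperBiderivation (A : LieSuperAlg F L) (τ : ZMod 2) (δ : L → L → L) : Prop where
  add_left : ∀ x y z : L, δ (x + y) z = δ x z + δ y z
  smul_left : ∀ (c : F) (x z : L), δ (c • x) z = c • δ x z
  add_right : ∀ x y z : L, δ x (y + z) = δ x y + δ x z
  smul_right : ∀ (c : F) (x z : L), δ x (c • z) = c • δ x z
  deg : ∀ {i j : ZMod 2} {x y : L}, x ∈ A.G i → y ∈ A.G j → δ x y ∈ A.G (i + j + τ)
  skew : ∀ {i j : ZMod 2} {x y : L}, x ∈ A.G i → y ∈ A.G j →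
    δ x y = -(ssign F i j • δ y x)
  leibniz : ∀ {i j k : ZMod 2} {x y z : L}, x ∈ A.G i → y ∈ A.G j → z ∈ A.G k →
    δ (A.br x y) z = ssign F τ i • A.br x (δ y z) + ssign F j k • A.br (δ x z) y

/-- `f : L → L` is an even linear super-commuting map. -/
structure IsSuperCommuting (A : LieSuperAlg F L) (f : L → L) : Prop where
  map_add : ∀ x y : L, f (x + y) = f x + f y
  map_smul : ∀ (c : F) (x : L), f (c • x) = c • f x
  even : ∀ {i : ZMod 2} {x : L}, x ∈ A.G i → f x ∈ A.G i
  comm : ∀ x y : L, A.br (f x) y = A.br x (f y)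

/-- `γ : L → L` is a homogeneous element of the centroid `Γ(L)`, of degree `τ`. -/
structure InCentroid (A : LieSuperAlg F L) (τ : ZMod 2) (γ : L → L) : Prop where
  map_add : ∀ x y : L, γ (x + y) = γ x + γ y
  map_smul : ∀ (c : F) (x : L), γ (c • x) = c • γ x
  deg : ∀ {i : ZMod 2} {x : L}, x ∈ A.G i → γ x ∈ A.G (i + τ)
  centroid : ∀ {i j : ZMod 2} {x y : L}, x ∈ A.G i → y ∈ A.G j →
    γ (A.br x y) = ssign F τ i • A.br x (γ y)

/-- The derived subalgebra `L' = [L, L]`, the span of all brackets. -/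
def derived (A : LieSuperAlg F L) : Submodule F L :=
  Submodule.span F {z : L | ∃ x y : L, z = A.br x y}

/-- The center `Z(L)` as a submodule. -/
def centerSub (A : LieSuperAlg F L) : Submodule F L where
  carrier := {v : L | ∀ x : L, A.br x v = 0}
  add_mem' := by
    intro a b ha hb x
    rw [A.br_add_right, ha x, hb x, add_zero]
  zero_mem' := by
    intro x
    simpa using A.br_smul_right (0 : F) x 0
  smul_mem' := by
    intro c a ha x
    rw [A.br_smul_right, ha x, smul_zero]

lemma ssign_zero_left (j : ZMod 2) : ssign F 0 j = 1 := by simp [ssign]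

lemma ssign_zero_right (i : ZMod 2) : ssign F i 0 = 1 := by simp [ssign]

lemma ssign_one_one : ssign F 1 1 = -1 := by simp [ssign]

lemma zmod_two_eq_zero_or_one : ∀ n : ZMod 2, n = 0 ∨ n = 1 := by decide

lemma zmod_two_one_add_one : (1 + 1 : ZMod 2) = 0 := rfl

namespace LieSuperAlg

variable (A : LieSuperAlg F L)

def brₗ : L →ₗ[F] L →ₗ[F] L :=
  LinearMap.mk₂ F A.br A.br_add_left A.br_smul_left A.br_add_right A.br_smul_right

lemma br_neg_left (x z : L) : A.br (-x) z = -A.br x z := LinearMap.congr_fun (A.brₗ.map_neg x) z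

lemma br_neg_right (x z : L) : A.br x (-z) = -A.br x z := (A.brₗ x).map_neg z

lemma br_sub_right (x y z : L) : A.br x (y - z) = A.br x y - A.br x z := (A.brₗ x).map_sub y z

variable {A}

lemma br_br_swap_left {i j : ZMod 2} {a b : L} (ha : a ∈ A.G i) (hb : b ∈ A.G j) (c : L) :
    A.br (A.br a b) c = -(ssign F i j • A.br (A.br b a) c) := by
  rw [A.super_skew ha hb, br_neg_left, A.br_smul_left]

lemma br_br_swap_right {i j : ZMod 2} {a b : L} (ha : a ∈ A.G i) (hb : b ∈ A.G j) (c : L) :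
    A.br c (A.br a b) = -(ssign F i j • A.br c (A.br b a)) := by
  rw [A.super_skew ha hb, br_neg_right, A.br_smul_right]

lemma br_mem_of_homogeneous (S : Submodule F L)
    (h : ∀ {i j : ZMod 2} {a b : L}, a ∈ A.G i → b ∈ A.G j → A.br a b ∈ S) (a b : L) :
    A.br a b ∈ S := by
  have mem_iSup (c : L) : c ∈ ⨆ i, A.G i := A.isInternal.submodule_iSup_eq_top ▸ Submodule.mem_top
  have of_homogeneous_right {j : ZMod 2} {b : L} (hb : b ∈ A.G j) (a : L) : A.br a b ∈ S :=
    (iSup_le fun _ _ ha => h ha hb : ⨆ i, A.G i ≤ S.comap (A.brₗ.flip b)) (mem_iSup a)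
  exact (iSup_le fun _ _ hb => of_homogeneous_right hb a : ⨆ j, A.G j ≤ S.comap (A.brₗ a))
    (mem_iSup b)

lemma derived_le (S : Submodule F L)
    (h : ∀ {i j : ZMod 2} {a b : L}, a ∈ A.G i → b ∈ A.G j → A.br a b ∈ S) : derived A ≤ S :=
  Submodule.span_le.mpr fun _ ⟨a, b, hab⟩ => hab ▸ br_mem_of_homogeneous S h a b

end LieSuperAlg

namespace IsSuperBiderivation

open LieSuperAlg

variable {A : LieSuperAlg F L} {τ : ZMod 2} {δ : L → L → L}

lemma br_apply_swap_left (hδ : IsSuperBiderivation A τ δ) {i j : ZMod 2} {x y : L}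
    (hx : x ∈ A.G i) (hy : y ∈ A.G j) (z : L) :
    A.br (δ x y) z = -(ssign F i j • A.br (δ y x) z) := by
  rw [hδ.skew hx hy, br_neg_left, A.br_smul_left]

lemma br_apply_swap_right (hδ : IsSuperBiderivation A τ δ) {i j : ZMod 2} {x y : L}
    (hx : x ∈ A.G i) (hy : y ∈ A.G j) (z : L) :
    A.br z (δ x y) = -(ssign F i j • A.br z (δ y x)) := by
  rw [hδ.skew hx hy, br_neg_right, A.br_smul_right]

lemma apply_br_right (hδ : IsSuperBiderivation A τ δ) {i j k : ZMod 2} {x y z : L}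
    (hx : x ∈ A.G i) (hy : y ∈ A.G j) (hz : z ∈ A.G k) :
    δ x (A.br y z) = A.br (δ x y) z + ssign F (i + τ) j • A.br y (δ x z) := by
  linear_combination (norm := (
      rcases zmod_two_eq_zero_or_one i with rfl | rfl <;>
      rcases zmod_two_eq_zero_or_one j with rfl | rfl <;>
      rcases zmod_two_eq_zero_or_one k with rfl | rfl <;>
      rcases zmod_two_eq_zero_or_one τ with rfl | rfl <;>
      simp only [add_zero, zero_add, zmod_two_one_add_one, ssign_zero_left, ssign_zero_right,
        ssign_one_one] <;> module))
    hδ.skew hx (A.br_deg hy hz) - (ssign F i j * ssign F i k) • hδ.leibniz hy hz hx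
    - (ssign F i j * ssign F i k * ssign F j τ) • hδ.br_apply_swap_right hz hx y
    - ssign F i j • hδ.br_apply_swap_left hy hx z

lemma br_apply_br_exchange (hδ : IsSuperBiderivation A τ δ) {i j k l : ZMod 2} {x y u v : L}
    (hx : x ∈ A.G i) (hy : y ∈ A.G j) (hu : u ∈ A.G k) (hv : v ∈ A.G l) :
    A.br (δ x y) (A.br u v) - ssign F τ (i + j) • A.br (A.br x y) (δ u v)
      = (ssign F i k * ssign F i j * ssign F k j) •
        (A.br (δ u y) (A.br x v) - ssign F τ (k + j) • A.br (A.br u y) (δ x v)) := by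
  have expand_left := hδ.leibniz hx hu (A.br_deg hy hv)
  have expand_left_x : A.br x (δ u (A.br y v))
      = A.br x (A.br (δ u y) v) + ssign F (k + τ) j • A.br x (A.br y (δ u v)) := by
    rw [hδ.apply_br_right hu hy hv, A.br_add_right, A.br_smul_right]
  have expand_left_u : A.br (δ x (A.br y v)) u
      = A.br (A.br (δ x y) v) u + ssign F (i + τ) j • A.br (A.br y (δ x v)) u := by
    rw [hδ.apply_br_right hx hy hv, A.br_add_left, A.br_smul_left]
  have expand_right := hδ.apply_br_right (A.br_deg hx hu) hy hv
  have expand_right_v : A.br (δ (A.br x u) y) v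
      = ssign F τ i • A.br (A.br x (δ u y)) v + ssign F k j • A.br (A.br (δ x y) u) v := by
    rw [hδ.leibniz hx hu hy, A.br_add_left, A.br_smul_left, A.br_smul_left]
  have expand_right_y : A.br y (δ (A.br x u) v)
      = ssign F τ i • A.br y (A.br x (δ u v)) + ssign F k l • A.br y (A.br (δ x v) u) := by
    rw [hδ.leibniz hx hu hv, A.br_add_right, A.br_smul_right, A.br_smul_right]
  linear_combination (norm := (
      rcases zmod_two_eq_zero_or_one i with rfl | rfl <;>
      rcases zmod_two_eq_zero_or_one j with rfl | rfl <;>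
      rcases zmod_two_eq_zero_or_one k with rfl | rfl <;>
      rcases zmod_two_eq_zero_or_one l with rfl | rfl <;>
      rcases zmod_two_eq_zero_or_one τ with rfl | rfl <;>
      simp only [add_zero, zero_add, zmod_two_one_add_one, ssign_zero_left, ssign_zero_right,
        ssign_one_one] <;> module))
    ssign F k j • expand_left + (ssign F i τ * ssign F k j) • expand_left_x
    + ssign F k l • expand_left_u - ssign F k j • expand_right - ssign F k j • expand_right_v
    - (ssign F i j * ssign F j τ) • expand_right_y
    + (ssign F i τ * ssign F k j) • A.super_jacobi hx (hδ.deg hu hy) hv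
    + (ssign F i τ * ssign F j τ) • A.super_jacobi hx hy (hδ.deg hu hv)
    - ssign F k l • A.super_jacobi (hδ.deg hx hy) hv hu
    + ssign F k l • br_br_swap_right hv hu (δ x y)
    - A.super_skew (A.br_deg (hδ.deg hx hy) hu) hv
    - (ssign F i j * ssign F k l * ssign F j τ) • A.super_jacobi hy (hδ.deg hx hv) hu
    - (ssign F k l * ssign F j l) • br_br_swap_right hy hu (δ x v)
    + (ssign F i k * ssign F i j * ssign F k j * ssign F k τ * ssign F j τ) •
      A.super_skew (A.br_deg hu hy) (hδ.deg hx hv)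

lemma br_apply_br (h2 : (2 : F) ≠ 0) (hδ : IsSuperBiderivation A τ δ) {i j k l : ZMod 2}
    {x u y v : L} (hx : x ∈ A.G i) (hu : u ∈ A.G j) (hy : y ∈ A.G k) (hv : v ∈ A.G l) :
    A.br (δ x u) (A.br y v) = ssign F τ (i + j) • A.br (A.br x u) (δ y v) := by
  have two_smul_eq_zero :
      (2 : F) • (A.br (δ x u) (A.br y v) - ssign F τ (i + j) • A.br (A.br x u) (δ y v)) = 0 := by
    linear_combination (norm := (
        rcases zmod_two_eq_zero_or_one i with rfl | rfl <;>
        rcases zmod_two_eq_zero_or_one j with rfl | rfl <;>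
        rcases zmod_two_eq_zero_or_one k with rfl | rfl <;>
        rcases zmod_two_eq_zero_or_one l with rfl | rfl <;>
        rcases zmod_two_eq_zero_or_one τ with rfl | rfl <;>
        simp only [add_zero, zero_add, zmod_two_one_add_one, ssign_zero_left, ssign_zero_right,
          ssign_one_one] <;> module))
      (ssign F i k * ssign F j k) • hδ.br_apply_br_exchange hy hx hu hv
      + ssign F j k • hδ.br_apply_br_exchange hx hy hu hv
      - (ssign F i j * ssign F i k * ssign F j k) • hδ.br_apply_br_exchange hy hu hx hv
      - (ssign F i k * ssign F j k) • hδ.br_apply_swap_left hy hx (A.br u v)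
      + (ssign F i k * ssign F i τ * ssign F j k * ssign F k τ) • br_br_swap_left hy hx (δ u v)
      + ssign F i j • hδ.br_apply_swap_left hu hx (A.br y v)
      - (ssign F i j * ssign F i τ * ssign F j τ) • br_br_swap_left hu hx (δ y v)
      + (ssign F i j * ssign F i k) • hδ.br_apply_swap_left hu hy (A.br x v)
      - (ssign F i j * ssign F i k * ssign F j τ * ssign F k τ) • br_br_swap_left hu hy (δ x v)
  exact sub_eq_zero.mp ((smul_eq_zero.mp two_smul_eq_zero).resolve_left h2)

lemma br_br_apply_br_exchange (h2 : (2 : F) ≠ 0) (hδ : IsSuperBiderivation A τ δ)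
    {i j k l m : ZMod 2} {u x y z w : L}
    (hu : u ∈ A.G i) (hx : x ∈ A.G j) (hy : y ∈ A.G k) (hz : z ∈ A.G l) (hw : w ∈ A.G m) :
    A.br (A.br u x) (δ y (A.br z w) - ssign F τ k • A.br y (δ z w))
      = (ssign F j k * ssign F τ (j + k)) •
        A.br (A.br u y) (δ x (A.br z w) - ssign F τ j • A.br x (δ z w)) := by
  have expand_ux_y : A.br (δ u (A.br x y)) (A.br z w)
      = A.br (A.br (δ u x) y) (A.br z w)
        + ssign F (i + τ) j • A.br (A.br x (δ u y)) (A.br z w) := by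
    rw [hδ.apply_br_right hu hx hy, A.br_add_left, A.br_smul_left]
  have exchange_ux : A.br y (A.br (δ u x) (A.br z w))
      = ssign F τ (i + j) • A.br y (A.br (A.br u x) (δ z w)) := by
    rw [hδ.br_apply_br h2 hu hx hz hw, A.br_smul_right]
  have exchange_uy : A.br x (A.br (δ u y) (A.br z w))
      = ssign F τ (i + k) • A.br x (A.br (A.br u y) (δ z w)) := by
    rw [hδ.br_apply_br h2 hu hy hz hw, A.br_smul_right]
  have jacobi_uxy : A.br (A.br u (A.br x y)) (δ z w)
      = A.br (A.br (A.br u x) y) (δ z w) + ssign F i j • A.br (A.br x (A.br u y)) (δ z w) := by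
    rw [A.super_jacobi hu hx hy, A.br_add_left, A.br_smul_left]
  rw [br_sub_right, br_sub_right, A.br_smul_right, A.br_smul_right]
  linear_combination (norm := (
      rcases zmod_two_eq_zero_or_one i with rfl | rfl <;>
      rcases zmod_two_eq_zero_or_one j with rfl | rfl <;>
      rcases zmod_two_eq_zero_or_one k with rfl | rfl <;>
      rcases zmod_two_eq_zero_or_one l with rfl | rfl <;>
      rcases zmod_two_eq_zero_or_one m with rfl | rfl <;>
      rcases zmod_two_eq_zero_or_one τ with rfl | rfl <;>
      simp only [add_zero, zero_add, zmod_two_one_add_one, ssign_zero_left, ssign_zero_right,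
        ssign_one_one] <;> module))
    (ssign F i τ * ssign F j τ) • hδ.br_apply_br h2 hu (A.br_deg hx hy) hz hw
    - (ssign F i τ * ssign F j τ) • expand_ux_y
    + (ssign F i τ * ssign F j τ) • A.super_jacobi (hδ.deg hu hx) hy (A.br_deg hz hw)
    - (ssign F i τ * ssign F j τ) • hδ.br_apply_br h2 hu hx hy (A.br_deg hz hw)
    + (ssign F i k * ssign F i τ * ssign F j k * ssign F j τ * ssign F k τ) • exchange_ux
    - ssign F k τ • A.super_jacobi (A.br_deg hu hx) hy (hδ.deg hz hw)
    + (ssign F i j * ssign F i τ) • A.super_jacobi hx (hδ.deg hu hy) (A.br_deg hz hw)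
    + (ssign F i τ * ssign F j k * ssign F j τ) • hδ.br_apply_br h2 hu hy hx (A.br_deg hz hw)
    - (ssign F i j * ssign F i τ) • exchange_uy
    - (ssign F i j * ssign F k τ) • A.super_jacobi hx (A.br_deg hu hy) (hδ.deg hz hw)
    + ssign F k τ • jacobi_uxy

lemma br_br_apply_br_sub_eq_zero (h2 : (2 : F) ≠ 0) (hδ : IsSuperBiderivation A τ δ)
    {i j k l m : ZMod 2} {u x y p q : L}
    (hu : u ∈ A.G i) (hx : x ∈ A.G j) (hy : y ∈ A.G k) (hp : p ∈ A.G l) (hq : q ∈ A.G m) :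
    A.br (A.br p q) (δ u (A.br x y) - ssign F τ i • A.br u (δ x y)) = 0 := by
  have two_smul_eq_zero :
      (2 : F) • A.br (A.br p q) (δ u (A.br x y) - ssign F τ i • A.br u (δ x y)) = 0 := by
    linear_combination (norm := (
        rcases zmod_two_eq_zero_or_one i with rfl | rfl <;>
        rcases zmod_two_eq_zero_or_one l with rfl | rfl <;>
        rcases zmod_two_eq_zero_or_one m with rfl | rfl <;>
        rcases zmod_two_eq_zero_or_one τ with rfl | rfl <;>
        simp only [add_zero, zero_add, zmod_two_one_add_one, ssign_zero_left, ssign_zero_right,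
          ssign_one_one] <;> module))
      hδ.br_br_apply_br_exchange h2 hp hq hu hx hy
      - (ssign F i l * ssign F i m * ssign F i τ * ssign F m τ) •
        hδ.br_br_apply_br_exchange h2 hu hp hq hx hy
      + (ssign F i l * ssign F i τ * ssign F l m * ssign F l τ) •
        hδ.br_br_apply_br_exchange h2 hq hu hp hx hy
      + (ssign F i m * ssign F i τ * ssign F m τ) •
        br_br_swap_left hp hu (δ q (A.br x y) - ssign F τ m • A.br q (δ x y))
      - (ssign F i l * ssign F i m * ssign F i τ * ssign F l m * ssign F l τ) •
        br_br_swap_left hu hq (δ p (A.br x y) - ssign F τ l • A.br p (δ x y))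
      + ssign F l m • br_br_swap_left hq hp (δ u (A.br x y) - ssign F τ i • A.br u (δ x y))
  exact (smul_eq_zero.mp two_smul_eq_zero).resolve_left h2

end IsSuperBiderivation

theorem stmt3 (h2 : (2 : F) ≠ 0) (A : LieSuperAlg F L) (τ : ZMod 2) (δ : L → L → L)
    (hδ : IsSuperBiderivation A τ δ) {i j k : ZMod 2} {u x y : L}
    (hu : u ∈ A.G i) (hx : x ∈ A.G j) (hy : y ∈ A.G k) :
    ∀ p ∈ derived A, A.br p (δ u (A.br x y) - ssign F τ i • A.br u (δ x y)) = 0 :=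
  fun _ hp => LieSuperAlg.derived_le (LinearMap.ker (A.brₗ.flip _))
    (fun ha hb => hδ.br_br_apply_br_sub_eq_zero h2 hu hx hy ha hb) hp
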